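/- arXiv:1904.10339 — 3 statements merged into one kernel-verified Lean document; each statement's English description precedes it below -/
import Mathlib

section
/- Let n, m, k, r be positive integers, S_1,…,S_r ∈ ℝ^{n×n}, X ∈ ℝ^{n×m}, E ∈ ℝ^{m×m}. Let P ∈ ℝ^{n²×r} have ℓ-th column vec(S_ℓ), let U = [((XE^{k−1})ᵀ ⊗ I_n)P, ((XE^{k−2})ᵀ ⊗ I_n)P, …, (Xᵀ ⊗ I_n)P] ∈ ℝ^{mn×kr} and b = vec(−XE^k) ∈ ℝ^{mn}. Given coefficient vectors α_0,…,α_{k−1} ∈ ℝ^r, set A_i = Σ_{ℓ=1}^r α_i(ℓ) S_ℓ and let x ∈ ℝ^{kr} be the concatenation whose j-th block of length r (for j = 0,…,k−1, counted from the top) equals α_{k−1−j}. Then X E^k + Σ_{i=0}^{k−1} A_i X E^i = 0 if and only if U·x = b. -/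
open Matrix
open scoped Kronecker

/-! Since `vec (S * M) = (Mᵀ ⊗ I) vec S`, the `j`-th block column of `U` applied to the `j`-th
block of `x` is `vec (A_{k-1-j} X E^{k-1-j})`; summing over `j` gives
`U x = vec (∑ᵢ Aᵢ X Eⁱ)`, and the claim follows from injectivity of `vec`. -/

/-- Column-stacking vectorization: `vecc C (j, i) = C i j`. -/
def vecc {n m : ℕ} (C : Matrix (Fin n) (Fin m) ℝ) : Fin m × Fin n → ℝ :=
  fun ji => C ji.2 ji.1

theorem vecc_eq_vec {n m : ℕ} (C : Matrix (Fin n) (Fin m) ℝ) : vecc C = vec C := rfl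

namespace Matrix

variable {R ι κ l m : Type*} [Fintype ι] [Fintype κ]

theorem mulVec_prod_eq_sum [NonUnitalNonAssocSemiring R] (U : Matrix l (κ × ι) R)
    (x : κ × ι → R) :
    U *ᵥ x = ∑ j, (of fun row ℓ => U row (j, ℓ)) *ᵥ fun ℓ => x (j, ℓ) := by
  ext row
  simp only [mulVec, dotProduct, Fintype.sum_prod_type, Finset.sum_apply, of_apply]

theorem mulVec_eq_vec_sum_smul [CommSemiring R] {n : Type*} [Fintype n]
    (S : ι → Matrix n n R) (P : Matrix (n × n) ι R)
    (hP : ∀ ℓ, (fun ji => P ji ℓ) = vec (S ℓ)) (y : ι → R) :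
    P *ᵥ y = vec (∑ ℓ, y ℓ • S ℓ) := by
  ext ji
  simp only [mulVec, dotProduct, vec_sum, vec_smul, Finset.sum_apply, Pi.smul_apply,
    smul_eq_mul, ← hP, mul_comm]

theorem kronecker_one_mul_mulVec_eq_vec [CommSemiring R] {n : Type*} [Fintype n]
    [DecidableEq n] (S : ι → Matrix n n R) (P : Matrix (n × n) ι R)
    (hP : ∀ ℓ, (fun ji => P ji ℓ) = vec (S ℓ)) (M : Matrix n m R) (y : ι → R) :
    (Mᵀ ⊗ₖ (1 : Matrix n n R) * P) *ᵥ y = vec ((∑ ℓ, y ℓ • S ℓ) * M) := by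
  rw [← mulVec_mulVec, mulVec_eq_vec_sum_smul S P hP, kronecker_mulVec_vec, Matrix.one_mul,
    transpose_transpose]

end Matrix

theorem stmt_4_general (n m k r : ℕ)
    (S : Fin r → Matrix (Fin n) (Fin n) ℝ)
    (X : Matrix (Fin n) (Fin m) ℝ) (E : Matrix (Fin m) (Fin m) ℝ)
    (P : Matrix (Fin n × Fin n) (Fin r) ℝ)
    (hP : ∀ ℓ : Fin r, (fun ji => P ji ℓ) = vecc (S ℓ))
    (U : Matrix (Fin m × Fin n) (Fin k × Fin r) ℝ)
    (hU : ∀ row col, U row col =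
      (((X * E ^ (k - 1 - (col.1 : ℕ)))ᵀ ⊗ₖ (1 : Matrix (Fin n) (Fin n) ℝ)) * P) row col.2)
    (b : Fin m × Fin n → ℝ)
    (hb : b = vecc (-(X * E ^ k)))
    (α : Fin k → Fin r → ℝ)
    (A : Fin k → Matrix (Fin n) (Fin n) ℝ)
    (hA : ∀ i : Fin k, A i = ∑ ℓ : Fin r, α i ℓ • S ℓ)
    (x : Fin k × Fin r → ℝ)
    (hx : ∀ (j : Fin k) (ℓ : Fin r), x (j, ℓ) = α (Fin.rev j) ℓ) :
    X * E ^ k + ∑ i : Fin k, A i * X * E ^ (i : ℕ) = 0 ↔ U.mulVec x = b := by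
  have hUx : U *ᵥ x = vec (∑ i : Fin k, A i * X * E ^ (i : ℕ)) := by
    rw [mulVec_prod_eq_sum, vec_sum]
    refine Fintype.sum_equiv Fin.revPerm _ _ fun j => ?_
    have hexp : k - 1 - (j : ℕ) = (j.rev : ℕ) := by rw [Fin.val_rev]; omega
    have hblock : (of fun row ℓ => U row (j, ℓ)) =
        (X * E ^ (j.rev : ℕ))ᵀ ⊗ₖ (1 : Matrix (Fin n) (Fin n) ℝ) * P := by
      ext row ℓ
      rw [of_apply, hU, hexp]
    simp only [hblock, kronecker_one_mul_mulVec_eq_vec S P hP, hx, ← hA, Fin.revPerm_apply,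
      Matrix.mul_assoc]
  rw [hUx, hb, vecc_eq_vec, vec_inj, add_eq_zero_iff_eq_neg']

theorem stmt_4 (n m k r : ℕ) (hn : 0 < n) (hm : 0 < m) (hk : 0 < k) (hr : 0 < r)
    (S : Fin r → Matrix (Fin n) (Fin n) ℝ)
    (X : Matrix (Fin n) (Fin m) ℝ) (E : Matrix (Fin m) (Fin m) ℝ)
    (P : Matrix (Fin n × Fin n) (Fin r) ℝ)
    (hP : ∀ ℓ : Fin r, (fun ji => P ji ℓ) = vecc (S ℓ))
    (U : Matrix (Fin m × Fin n) (Fin k × Fin r) ℝ)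
    (hU : ∀ row col, U row col =
      (((X * E ^ (k - 1 - (col.1 : ℕ)))ᵀ ⊗ₖ (1 : Matrix (Fin n) (Fin n) ℝ)) * P) row col.2)
    (b : Fin m × Fin n → ℝ)
    (hb : b = vecc (-(X * E ^ k)))
    (α : Fin k → Fin r → ℝ)
    (A : Fin k → Matrix (Fin n) (Fin n) ℝ)
    (hA : ∀ i : Fin k, A i = ∑ ℓ : Fin r, α i ℓ • S ℓ)
    (x : Fin k × Fin r → ℝ)
    (hx : ∀ (j : Fin k) (ℓ : Fin r), x (j, ℓ) = α (Fin.rev j) ℓ) :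
    X * E ^ k + ∑ i : Fin k, A i * X * E ^ (i : ℕ) = 0 ↔ U.mulVec x = b :=
  stmt_4_general n m k r S X E P hP U hU b hb α A hA x hx
end

section
/- Let n, m, k, r be positive integers, S_1,…,S_r ∈ ℝ^{n×n} linearly independent, X ∈ ℝ^{n×m}, E ∈ ℝ^{m×m}, P ∈ ℝ^{n²×r} with ℓ-th column vec(S_ℓ), U = [((XE^{k−1})ᵀ ⊗ I_n)P, …, (Xᵀ ⊗ I_n)P] ∈ ℝ^{mn×kr}, b = vec(−XE^k), and U† a Moore–Penrose pseudoinverse of U. Then there exists a unique tuple (A_0,…,A_{k−1}) of matrices in the span of {S_1,…,S_r} satisfying X E^k + Σ_{i=0}^{k−1} A_i X E^i = 0 if and only if U(U†b) = b and U†U = I_{kr}; in that case the unique solution is obtained from x = U†b by taking the j-th length-r block of x as the coefficient vector of A_{k−1−j} in the basis S_1,…,S_r. -/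
/-!
Reading off the coefficients of `A_0, …, A_{k-1}` in the basis `S_1, …, S_r` is a bijection from
`ℝ^{kr}` onto the tuples with entries in `span {S_ℓ}`, and by `vec (C M) = (Mᵀ ⊗ I) vec C` the
matrix equation for the tuple with coefficient vector `x` is the linear system `U x = b`.
For any `U†` with `U U† U = U`, the system has a solution iff `U (U† b) = b`, and it has at most
one iff `U` is injective, i.e. iff `U† U = I`.
-/

open Matrix
open scoped Kronecker

theorem Function.Injective.existsUnique_and_iff {α β : Type*} {f : α → β}
    (hf : Function.Injective f) {p q : β → Prop} (hp : ∀ y, p y ↔ y ∈ Set.range f) :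
    (∃! y, p y ∧ q y) ↔ ∃! x, q (f x) := by
  constructor
  · rintro ⟨y, ⟨hpy, hqy⟩, huniq⟩
    obtain ⟨x, rfl⟩ := (hp y).1 hpy
    exact ⟨x, hqy, fun x' hx' => hf (huniq _ ⟨(hp _).2 ⟨x', rfl⟩, hx'⟩)⟩
  · rintro ⟨x, hqx, huniq⟩
    refine ⟨f x, ⟨(hp _).2 ⟨x, rfl⟩, hqx⟩, ?_⟩
    rintro y ⟨hpy, hqy⟩
    obtain ⟨x', rfl⟩ := (hp y).1 hpy
    rw [huniq x' hqy]

namespace Matrix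

variable {ι κ R : Type*} [Fintype ι] [Fintype κ] [DecidableEq κ] [Ring R]

theorem mulVec_injective_iff_mul_eq_one_of_mul_mul_self {U : Matrix ι κ R} {G : Matrix κ ι R}
    (hG : U * G * U = U) : Function.Injective U.mulVec ↔ G * U = 1 := by
  refine ⟨fun hU => ext_iff_mulVec.2 fun v => hU ?_, fun hGU x y hxy => ?_⟩
  · rw [mulVec_mulVec, ← Matrix.mul_assoc, hG, one_mulVec]
  · rw [← one_mulVec x, ← one_mulVec y, ← hGU, ← mulVec_mulVec, ← mulVec_mulVec, hxy]

theorem existsUnique_mulVec_eq_iff_of_mul_mul_self {U : Matrix ι κ R} {G : Matrix κ ι R}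
    (hG : U * G * U = U) (b : ι → R) :
    (∃! x, U *ᵥ x = b) ↔ U *ᵥ (G *ᵥ b) = b ∧ G * U = 1 := by
  rw [← mulVec_injective_iff_mul_eq_one_of_mul_mul_self hG]
  constructor
  · rintro ⟨x, rfl, huniq⟩
    refine ⟨by rw [mulVec_mulVec, mulVec_mulVec, hG], fun y z hyz => ?_⟩
    have hxyz := huniq (x + (y - z)) <| by
      dsimp only
      rw [mulVec_add, mulVec_sub, hyz, sub_self, add_zero]
    exact sub_eq_zero.1 (add_eq_left.1 hxyz)
  · rintro ⟨hsol, hinj⟩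
    exact ⟨G *ᵥ b, hsol, fun y hy => hinj (hy.trans hsol.symm)⟩

end Matrix

theorem vecc_injective {n m : ℕ} : Function.Injective (vecc : Matrix (Fin n) (Fin m) ℝ → _) :=
  fun _ _ h => Matrix.ext fun i j => congrFun h (j, i)

theorem vecc_mul {n p m : ℕ} (C : Matrix (Fin n) (Fin p) ℝ) (M : Matrix (Fin p) (Fin m) ℝ) :
    vecc (C * M) = (Mᵀ ⊗ₖ (1 : Matrix (Fin n) (Fin n) ℝ)) *ᵥ vecc C := by
  funext ⟨j, i⟩
  simp [vecc, mulVec, dotProduct, Fintype.sum_prod_type, mul_apply, one_apply, mul_comm]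

section CoeffTuple

variable {R M : Type*} [Semiring R] [AddCommMonoid M] [Module R M] {k r : ℕ}

/-- Block `j` of `x` holds the coefficients of `A_{k-1-j}`, matching the column blocks of `U`. -/
def coeffTuple (S : Fin r → M) (x : Fin k × Fin r → R) : Fin k → M :=
  fun i => ∑ ℓ, x (Fin.rev i, ℓ) • S ℓ

theorem coeffTuple_injective {S : Fin r → M} (hS : LinearIndependent R S) :
    Function.Injective (coeffTuple (R := R) (k := k) S) := by
  intro x y hxy
  funext ⟨j, ℓ⟩
  have hj := congrFun hxy (Fin.rev j)
  simp only [coeffTuple, Fin.rev_rev] at hj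
  exact Fintype.linearIndependent_iffₛ.1 hS _ _ hj ℓ

theorem forall_mem_span_iff_mem_range_coeffTuple (S : Fin r → M) (A : Fin k → M) :
    (∀ i, A i ∈ Submodule.span R (Set.range S)) ↔ A ∈ Set.range (coeffTuple (R := R) S) := by
  simp only [Submodule.mem_span_range_iff_exists_fun]
  constructor
  · intro hA
    choose c hc using hA
    exact ⟨fun jℓ => c (Fin.rev jℓ.1) jℓ.2, funext fun i => by simpa [coeffTuple] using hc i⟩
  · rintro ⟨x, rfl⟩ i
    exact ⟨_, rfl⟩

end CoeffTuple

section LinearSystem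

variable {n m k r : ℕ} {S : Fin r → Matrix (Fin n) (Fin n) ℝ} {X : Matrix (Fin n) (Fin m) ℝ}
  {E : Matrix (Fin m) (Fin m) ℝ} {P : Matrix (Fin n × Fin n) (Fin r) ℝ}
  {U : Matrix (Fin m × Fin n) (Fin k × Fin r) ℝ}

theorem mulVec_eq_vecc_sum_coeffTuple (hP : ∀ ℓ : Fin r, (fun ji => P ji ℓ) = vecc (S ℓ))
    (hU : ∀ row col, U row col =
      (((X * E ^ (k - 1 - (col.1 : ℕ)))ᵀ ⊗ₖ (1 : Matrix (Fin n) (Fin n) ℝ)) * P) row col.2)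
    (x : Fin k × Fin r → ℝ) :
    U *ᵥ x = vecc (∑ i : Fin k, coeffTuple S x i * X * E ^ (i : ℕ)) := by
  have hcol : ∀ row (j : Fin k) ℓ,
      U row (j, ℓ) = vecc (S ℓ * (X * E ^ (k - 1 - (j : ℕ)))) row := by
    intro row j ℓ
    rw [hU, vecc_mul, ← hP]
    rfl
  funext ⟨j, i⟩
  simp only [mulVec, dotProduct, Fintype.sum_prod_type, hcol, vecc, Matrix.sum_apply, coeffTuple]
  rw [← Equiv.sum_comp Fin.revPerm]
  refine Finset.sum_congr rfl fun p _ => ?_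
  have hexp : k - 1 - (Fin.rev p : ℕ) = p := by rw [Fin.val_rev]; omega
  rw [Fin.revPerm_apply, hexp, Matrix.sum_mul, Matrix.sum_mul, Matrix.sum_apply]
  refine Finset.sum_congr rfl fun ℓ _ => ?_
  rw [Matrix.smul_mul, Matrix.smul_mul, Matrix.smul_apply, smul_eq_mul, mul_comm,
    Matrix.mul_assoc]

theorem mulVec_eq_vecc_neg_iff_add_sum_eq_zero
    (hP : ∀ ℓ : Fin r, (fun ji => P ji ℓ) = vecc (S ℓ))
    (hU : ∀ row col, U row col =
      (((X * E ^ (k - 1 - (col.1 : ℕ)))ᵀ ⊗ₖ (1 : Matrix (Fin n) (Fin n) ℝ)) * P) row col.2)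
    (x : Fin k × Fin r → ℝ) :
    U *ᵥ x = vecc (-(X * E ^ k)) ↔
      X * E ^ k + ∑ i : Fin k, coeffTuple S x i * X * E ^ (i : ℕ) = 0 := by
  rw [mulVec_eq_vecc_sum_coeffTuple hP hU, vecc_injective.eq_iff, add_comm, add_eq_zero_iff_eq_neg]

end LinearSystem

theorem stmt_8_general (n m k r : ℕ)
    (S : Fin r → Matrix (Fin n) (Fin n) ℝ)
    (X : Matrix (Fin n) (Fin m) ℝ) (E : Matrix (Fin m) (Fin m) ℝ)
    (P : Matrix (Fin n × Fin n) (Fin r) ℝ)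
    (hP : ∀ ℓ : Fin r, (fun ji => P ji ℓ) = vecc (S ℓ))
    (U : Matrix (Fin m × Fin n) (Fin k × Fin r) ℝ)
    (hU : ∀ row col, U row col =
      (((X * E ^ (k - 1 - (col.1 : ℕ)))ᵀ ⊗ₖ (1 : Matrix (Fin n) (Fin n) ℝ)) * P) row col.2)
    (b : Fin m × Fin n → ℝ)
    (hb : b = vecc (-(X * E ^ k)))
    (Ud : Matrix (Fin k × Fin r) (Fin m × Fin n) ℝ)
    (hd1 : U * Ud * U = U)
    (hS : LinearIndependent ℝ S) :
    ((∃! A : Fin k → Matrix (Fin n) (Fin n) ℝ,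
        (∀ i : Fin k, A i ∈ Submodule.span ℝ (Set.range S)) ∧
          X * E ^ k + ∑ i : Fin k, A i * X * E ^ (i : ℕ) = 0) ↔
      (U.mulVec (Ud.mulVec b) = b ∧ Ud * U = 1)) ∧
    ((U.mulVec (Ud.mulVec b) = b ∧ Ud * U = 1) →
      ∀ A : Fin k → Matrix (Fin n) (Fin n) ℝ,
        (∀ i : Fin k, A i ∈ Submodule.span ℝ (Set.range S)) ∧
          X * E ^ k + ∑ i : Fin k, A i * X * E ^ (i : ℕ) = 0 →
        ∀ i : Fin k, A i = ∑ ℓ : Fin r, (Ud.mulVec b) (Fin.rev i, ℓ) • S ℓ) := by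
  subst hb
  have hsystem := mulVec_eq_vecc_neg_iff_add_sum_eq_zero hP hU
  have hunique := ((coeffTuple_injective hS).existsUnique_and_iff
    (q := fun A => X * E ^ k + ∑ i : Fin k, A i * X * E ^ (i : ℕ) = 0)
    (forall_mem_span_iff_mem_range_coeffTuple S)).trans <|
      (existsUnique_congr fun x => (hsystem x).symm).trans
        (existsUnique_mulVec_eq_iff_of_mul_mul_self hd1 _)
  refine ⟨hunique, fun hcond A hA i => ?_⟩
  obtain ⟨_, -, huniq⟩ := hunique.2 hcond
  have hsol := (hsystem (Ud *ᵥ vecc (-(X * E ^ k)))).1 hcond.1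
  exact congrFun ((huniq A hA).trans (huniq _
    ⟨(forall_mem_span_iff_mem_range_coeffTuple S _).2 ⟨_, rfl⟩, hsol⟩).symm) i

theorem stmt_8 (n m k r : ℕ) (hn : 0 < n) (hm : 0 < m) (hk : 0 < k) (hr : 0 < r)
    (S : Fin r → Matrix (Fin n) (Fin n) ℝ)
    (X : Matrix (Fin n) (Fin m) ℝ) (E : Matrix (Fin m) (Fin m) ℝ)
    (P : Matrix (Fin n × Fin n) (Fin r) ℝ)
    (hP : ∀ ℓ : Fin r, (fun ji => P ji ℓ) = vecc (S ℓ))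
    (U : Matrix (Fin m × Fin n) (Fin k × Fin r) ℝ)
    (hU : ∀ row col, U row col =
      (((X * E ^ (k - 1 - (col.1 : ℕ)))ᵀ ⊗ₖ (1 : Matrix (Fin n) (Fin n) ℝ)) * P) row col.2)
    (b : Fin m × Fin n → ℝ)
    (hb : b = vecc (-(X * E ^ k)))
    (Ud : Matrix (Fin k × Fin r) (Fin m × Fin n) ℝ)
    (hd1 : U * Ud * U = U) (hd2 : Ud * U * Ud = Ud)
    (hd3 : (U * Ud)ᵀ = U * Ud) (hd4 : (Ud * U)ᵀ = Ud * U)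
    (hS : LinearIndependent ℝ S) :
    ((∃! A : Fin k → Matrix (Fin n) (Fin n) ℝ,
        (∀ i : Fin k, A i ∈ Submodule.span ℝ (Set.range S)) ∧
          X * E ^ k + ∑ i : Fin k, A i * X * E ^ (i : ℕ) = 0) ↔
      (U.mulVec (Ud.mulVec b) = b ∧ Ud * U = 1)) ∧
    ((U.mulVec (Ud.mulVec b) = b ∧ Ud * U = 1) →
      ∀ A : Fin k → Matrix (Fin n) (Fin n) ℝ,
        (∀ i : Fin k, A i ∈ Submodule.span ℝ (Set.range S)) ∧
          X * E ^ k + ∑ i : Fin k, A i * X * E ^ (i : ℕ) = 0 →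
        ∀ i : Fin k, A i = ∑ ℓ : Fin r, (Ud.mulVec b) (Fin.rev i, ℓ) • S ℓ) :=
  stmt_8_general n m k r S X E P hP U hU b hb Ud hd1 hS
end

section
/- Let A_0,…,A_k ∈ ℝ^{n×n} with A_k invertible, with n ≥ 1, and consider the matrix over ℝ[X] given by P = Σ_{i=0}^{k} X^i • (A_i mapped entrywise into ℝ[X]). Then the polynomial det(P) ∈ ℝ[X] has degree exactly k·n, and its leading coefficient equals det(A_k). -/
/-!
Every entry of `P = ∑ Xⁱ • Aᵢ` has degree at most `k`, with `Xᵏ`-coefficient the corresponding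
entry of `A_k`. Hence each of the `n` factors of a term of the Leibniz expansion of `det P` has
degree at most `k`, and reading off the `X^{kn}`-coefficient term by term gives `det A_k`, which
is nonzero because `A_k` is invertible.
-/

open Matrix Polynomial

namespace Matrix

section EntryDegreeBound

variable {n R : Type*} [DecidableEq n] [Fintype n] [CommRing R] {M : Matrix n n R[X]} {k : ℕ}

theorem natDegree_det_le_of_forall_natDegree_le (h : ∀ i j, (M i j).natDegree ≤ k) :
    M.det.natDegree ≤ Fintype.card n * k := by
  rw [det_apply]
  refine natDegree_sum_le_of_forall_le _ _ fun σ _ => ?_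
  calc (Equiv.Perm.sign σ • ∏ i, M (σ i) i).natDegree
      ≤ (∏ i, M (σ i) i).natDegree := by
        rcases Int.units_eq_one_or (Equiv.Perm.sign σ) with hσ | hσ
        · rw [hσ, one_smul]
        · rw [hσ, Units.neg_smul, one_smul, natDegree_neg]
    _ ≤ ∑ i, (M (σ i) i).natDegree := natDegree_prod_le _ _
    _ ≤ Finset.univ.card • k := Finset.sum_le_card_nsmul _ _ _ fun i _ => h _ _
    _ = Fintype.card n * k := by rw [Finset.card_univ, smul_eq_mul]

theorem coeff_det_of_forall_natDegree_le (h : ∀ i j, (M i j).natDegree ≤ k) :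
    M.det.coeff (Fintype.card n * k) = (M.map (coeff · k)).det := by
  rw [det_apply, det_apply, finsetSum_coeff]
  refine Finset.sum_congr rfl fun σ _ => ?_
  rw [coeff_smul, ← Finset.card_univ, coeff_prod_of_natDegree_le _ _ k fun i _ => h _ _]
  rfl

theorem natDegree_det_of_forall_natDegree_le (h : ∀ i j, (M i j).natDegree ≤ k)
    (hdet : (M.map (coeff · k)).det ≠ 0) :
    M.det.natDegree = Fintype.card n * k :=
  natDegree_eq_of_le_of_coeff_ne_zero (natDegree_det_le_of_forall_natDegree_le h)
    (by rwa [coeff_det_of_forall_natDegree_le h])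

theorem leadingCoeff_det_of_forall_natDegree_le (h : ∀ i j, (M i j).natDegree ≤ k)
    (hdet : (M.map (coeff · k)).det ≠ 0) :
    M.det.leadingCoeff = (M.map (coeff · k)).det := by
  rw [leadingCoeff, natDegree_det_of_forall_natDegree_le h hdet,
    coeff_det_of_forall_natDegree_le h]

end EntryDegreeBound

section MatrixPolynomial

variable {m m' R : Type*} [Semiring R] {k : ℕ} (A : Fin (k + 1) → Matrix m m' R)

theorem sum_X_pow_smul_map_C_apply (i : m) (j : m') :
    (∑ l : Fin (k + 1), (X : R[X]) ^ (l : ℕ) • (A l).map C) i j =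
      ∑ l : Fin (k + 1), C (A l i j) * X ^ (l : ℕ) := by
  simp only [sum_apply, smul_apply, map_apply, smul_eq_mul, X_pow_mul]

theorem natDegree_sum_X_pow_smul_map_C_apply_le (i : m) (j : m') :
    ((∑ l : Fin (k + 1), (X : R[X]) ^ (l : ℕ) • (A l).map C) i j).natDegree ≤ k := by
  rw [sum_X_pow_smul_map_C_apply]
  exact natDegree_sum_le_of_forall_le _ _ fun l _ =>
    (natDegree_C_mul_X_pow_le _ _).trans (Nat.lt_succ_iff.mp l.isLt)

theorem map_coeff_sum_X_pow_smul_map_C :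
    (∑ l : Fin (k + 1), (X : R[X]) ^ (l : ℕ) • (A l).map C).map (coeff · k) = A (Fin.last k) := by
  ext i j
  rw [map_apply, sum_X_pow_smul_map_C_apply, finsetSum_coeff,
    Finset.sum_eq_single (Fin.last k)]
  · simp
  · intro l _ hl
    rw [coeff_C_mul_X_pow, if_neg]
    exact (Fin.val_ne_iff.mpr hl).symm
  · simp

end MatrixPolynomial

end Matrix

theorem stmt_14_general (n k : ℕ) (A : Fin (k + 1) → Matrix (Fin n) (Fin n) ℝ)
    (hAk : Invertible (A (Fin.last k))) :
    (∑ i : Fin (k + 1), (Polynomial.X : ℝ[X]) ^ (i : ℕ) • (A i).map Polynomial.C).det.degree =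
        (k * n : ℕ) ∧
      (∑ i : Fin (k + 1), (Polynomial.X : ℝ[X]) ^ (i : ℕ) • (A i).map Polynomial.C).det.leadingCoeff =
        (A (Fin.last k)).det := by
  have hdeg := natDegree_sum_X_pow_smul_map_C_apply_le A
  have hdetA : (A (Fin.last k)).det ≠ 0 := (isUnit_det_of_invertible _).ne_zero
  have hdet : ((∑ i : Fin (k + 1), (X : ℝ[X]) ^ (i : ℕ) • (A i).map C).map (coeff · k)).det ≠ 0 := by
    rwa [map_coeff_sum_X_pow_smul_map_C]
  have hleadingCoeff := leadingCoeff_det_of_forall_natDegree_le hdeg hdet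
  rw [map_coeff_sum_X_pow_smul_map_C] at hleadingCoeff
  refine ⟨?_, hleadingCoeff⟩
  rw [degree_eq_natDegree (leadingCoeff_ne_zero.mp (hleadingCoeff.trans_ne hdetA)),
    natDegree_det_of_forall_natDegree_le hdeg hdet, Fintype.card_fin, mul_comm]

theorem stmt_14 (n k : ℕ) (hn : 1 ≤ n) (A : Fin (k + 1) → Matrix (Fin n) (Fin n) ℝ)
    (hAk : Invertible (A (Fin.last k))) :
    (∑ i : Fin (k + 1), (Polynomial.X : ℝ[X]) ^ (i : ℕ) • (A i).map Polynomial.C).det.degree =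
        (k * n : ℕ) ∧
      (∑ i : Fin (k + 1), (Polynomial.X : ℝ[X]) ^ (i : ℕ) • (A i).map Polynomial.C).det.leadingCoeff =
        (A (Fin.last k)).det :=
  stmt_14_general n k A hAk
end
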